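/- Suppose T is a normal subgroup of G such that A(T) is contained in the center of T, and π : Γ → G is a surjective homomorphism. Then for every normal subgroup N of G with N ⊆ T and a(N) = a(T), and every homomorphism φ : Γ → G with φ(x)N = π(x)N for all x ∈ Γ, one has b(N,φ,χ) ≤ b(T,π,χ); in particular the maximum of b(N,φ,χ) over all such pairs (N,φ) equals b(T,π,χ). -/

import Mathlib

/-- The index `ind(g) = n − #{orbits of ⟨ρ(g)⟩ on {1,…,n}}` of a group element under a
permutation representation `ρ : G → Sym({1,…,n})`. -/
noncomputable def permIndex {n : ℕ} {G : Type*} [Group G] (ρ : G →* Equiv.Perm (Fin n))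
    (g : G) : ℕ :=
  n - Nat.card (MulAction.orbitRel.Quotient (Subgroup.zpowers (ρ g)) (Fin n))

/-- `a(H) = min{ind(h) : h ∈ H, h ≠ 1}`. -/
noncomputable def aInv {n : ℕ} {G : Type*} [Group G] (ρ : G →* Equiv.Perm (Fin n))
    (H : Set G) : ℕ :=
  sInf {k | ∃ h ∈ H, h ≠ 1 ∧ permIndex ρ h = k}

/-- `A(H) = {h ∈ H : h ≠ 1 and ind(h) = a(H)}`. -/
noncomputable def ASet {n : ℕ} {G : Type*} [Group G] (ρ : G →* Equiv.Perm (Fin n))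
    (H : Set G) : Set G :=
  {h | h ∈ H ∧ h ≠ 1 ∧ permIndex ρ h = aInv ρ H}

/-- The `M`-conjugacy class of an element `c`. -/
def mConjClass {G : Type*} [Group G] (M : Subgroup G) (c : G) : Set G :=
  {g | ∃ t ∈ M, g = t * c * t⁻¹}

/-- The set of `M`-conjugacy classes contained in `A(M)`. -/
noncomputable def conjClassesIn {n : ℕ} {G : Type*} [Group G] (ρ : G →* Equiv.Perm (Fin n))
    (M : Subgroup G) : Set (Set G) :=
  {C | (∃ c ∈ M, C = mConjClass M c) ∧ C ⊆ ASet ρ (M : Set G)}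

/-- The twisted action `σ·C = {ψ(σ) c^{k(σ)} ψ(σ)⁻¹ : c ∈ C}`, where `k(σ)` represents
`χ(σ)⁻¹ ∈ (ℤ/mℤ)ˣ`. -/
def classAct {Γ G : Type*} [Group Γ] [Group G] {m : ℕ} (ψ : Γ →* G) (χ : Γ →* (ZMod m)ˣ)
    (σ : Γ) (C : Set G) : Set G :=
  {g | ∃ c ∈ C, g = ψ σ * c ^ (ZMod.val (((χ σ)⁻¹ : (ZMod m)ˣ) : ZMod m)) * (ψ σ)⁻¹}

/-- `b(M,ψ,χ)` : the number of orbits of the twisted action on the set of `M`-conjugacy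
classes contained in `A(M)`. -/
noncomputable def bInv {n : ℕ} {Γ G : Type*} [Group Γ] [Group G] {m : ℕ}
    (ρ : G →* Equiv.Perm (Fin n)) (M : Subgroup G) (ψ : Γ →* G) (χ : Γ →* (ZMod m)ˣ) : ℕ :=
  Nat.card {O : Set (Set G) |
    ∃ C ∈ conjClassesIn ρ M, O = {C' | ∃ σ : Γ, classAct ψ χ σ C = C'}}

/-!
If `A(T)` is central in `T` and `a(N) = a(T)` for `N ≤ T`, then `A(N) ⊆ A(T)`, so every
`N`-class in `A(N)` is a singleton `{c}` with `c` central in `T`. Since `φ(σ)` and `π(σ)` differ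
by an element of `N ≤ T`, they act on such a singleton in the same way; hence every orbit of
the `φ`-action on classes in `A(N)` is also an orbit of the `π`-action on classes in `A(T)`.
-/

section

variable {n : ℕ} {G : Type*} [Group G] (ρ : G →* Equiv.Perm (Fin n))

theorem ASet_subset_of_subset_of_aInv_eq {H K : Set G} (hHK : H ⊆ K)
    (ha : aInv ρ H = aInv ρ K) : ASet ρ H ⊆ ASet ρ K :=
  fun _ ⟨hH, hne, hind⟩ => ⟨hHK hH, hne, hind.trans ha⟩

theorem mem_mConjClass_self (M : Subgroup G) (c : G) : c ∈ mConjClass M c :=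
  ⟨1, M.one_mem, by group⟩

theorem mConjClass_eq_singleton {M : Subgroup G} {c : G} (hc : ∀ t ∈ M, c * t = t * c) :
    mConjClass M c = {c} := by
  refine Set.eq_singleton_iff_unique_mem.mpr ⟨mem_mConjClass_self M c, ?_⟩
  rintro _ ⟨t, ht, rfl⟩
  rw [← hc t ht, mul_inv_cancel_right]

theorem singleton_mem_conjClassesIn {M : Subgroup G} {c : G} (hcA : c ∈ ASet ρ (M : Set G))
    (hc : ∀ t ∈ M, c * t = t * c) : {c} ∈ conjClassesIn ρ M :=
  ⟨⟨c, hcA.1, (mConjClass_eq_singleton hc).symm⟩, Set.singleton_subset_iff.mpr hcA⟩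

theorem exists_eq_singleton_of_mem_conjClassesIn {N T : Subgroup G} (hNT : N ≤ T)
    (ha : aInv ρ (N : Set G) = aInv ρ (T : Set G))
    (hcenter : ∀ h ∈ ASet ρ (T : Set G), ∀ t ∈ T, h * t = t * h)
    {C : Set G} (hC : C ∈ conjClassesIn ρ N) : ∃ c ∈ ASet ρ (T : Set G), C = {c} := by
  obtain ⟨⟨c, -, rfl⟩, hCA⟩ := hC
  have hcA : c ∈ ASet ρ (T : Set G) :=
    ASet_subset_of_subset_of_aInv_eq ρ hNT ha (hCA (mem_mConjClass_self N c))
  exact ⟨c, hcA, mConjClass_eq_singleton fun t ht => hcenter c hcA t (hNT ht)⟩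

end

theorem mul_pow_mul_inv_eq_of_commute {G : Type*} [Group G] {a b c : G}
    (hc : Commute c (a⁻¹ * b)) (k : ℕ) : b * c ^ k * b⁻¹ = a * c ^ k * a⁻¹ := by
  calc b * c ^ k * b⁻¹ = a * ((a⁻¹ * b) * c ^ k * (a⁻¹ * b)⁻¹) * a⁻¹ := by group
    _ = a * c ^ k * a⁻¹ := by rw [← (hc.pow_left k).eq, mul_inv_cancel_right]

theorem classAct_singleton_congr {Γ G : Type*} [Group Γ] [Group G] {m : ℕ}
    {ψ ψ' : Γ →* G} (χ : Γ →* (ZMod m)ˣ) {σ : Γ} {c : G}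
    (hc : Commute c ((ψ σ)⁻¹ * ψ' σ)) : classAct ψ' χ σ {c} = classAct ψ χ σ {c} := by
  ext g
  simp only [classAct, Set.mem_singleton_iff, exists_eq_left, Set.mem_ofPred_eq,
    mul_pow_mul_inv_eq_of_commute hc]

theorem bInv_le_bInv {n : ℕ} {Γ G : Type*} [Group Γ] [Group G] [Finite G] {m : ℕ}
    (ρ : G →* Equiv.Perm (Fin n)) (χ : Γ →* (ZMod m)ˣ) {N T : Subgroup G} (hNT : N ≤ T)
    (ha : aInv ρ (N : Set G) = aInv ρ (T : Set G))
    (hcenter : ∀ h ∈ ASet ρ (T : Set G), ∀ t ∈ T, h * t = t * h)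
    {φ π : Γ →* G} (hφ : ∀ x, (π x)⁻¹ * φ x ∈ N) : bInv ρ N φ χ ≤ bInv ρ T π χ := by
  refine Nat.card_mono (Set.toFinite _) ?_
  rintro _ ⟨C, hC, rfl⟩
  obtain ⟨c, hcA, rfl⟩ := exists_eq_singleton_of_mem_conjClassesIn ρ hNT ha hcenter hC
  have hc : ∀ t ∈ T, c * t = t * c := hcenter c hcA
  refine ⟨{c}, singleton_mem_conjClassesIn ρ hcA hc, Set.ext fun C' => exists_congr fun σ => ?_⟩
  rw [classAct_singleton_congr χ (hc _ (hNT (hφ σ)))]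

theorem statement6_general {n : ℕ} {G : Type*} [Group G] [Finite G]
    (ρ : G →* Equiv.Perm (Fin n))
    {Γ : Type*} [Group Γ] {m : ℕ} (χ : Γ →* (ZMod m)ˣ)
    (T : Subgroup G) (hTnormal : T.Normal)
    (hcenter : ∀ h ∈ ASet ρ (T : Set G), ∀ t ∈ T, h * t = t * h)
    (π : Γ →* G) :
    (∀ N : Subgroup G, N.Normal → N ≤ T → aInv ρ (N : Set G) = aInv ρ (T : Set G) →
      ∀ φ : Γ →* G, (∀ x, (π x)⁻¹ * φ x ∈ N) → bInv ρ N φ χ ≤ bInv ρ T π χ) ∧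
    IsGreatest {k | ∃ N : Subgroup G, N.Normal ∧ N ≤ T ∧
        aInv ρ (N : Set G) = aInv ρ (T : Set G) ∧
        ∃ φ : Γ →* G, (∀ x, (π x)⁻¹ * φ x ∈ N) ∧ bInv ρ N φ χ = k}
      (bInv ρ T π χ) := by
  refine ⟨fun _ _ hNT ha _ hφ => bInv_le_bInv ρ χ hNT ha hcenter hφ,
    ⟨T, hTnormal, le_rfl, rfl, π, fun x => by simp, rfl⟩, ?_⟩
  rintro _ ⟨N, -, hNT, ha, φ, hφ, rfl⟩
  exact bInv_le_bInv ρ χ hNT ha hcenter hφ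

/-- Let `G` be a finite group with an injective homomorphism
`ρ : G → Sym({1,…,n})` with transitive image, `Γ` a group, `χ : Γ → (ℤ/mℤ)ˣ` a homomorphism
with `m` a multiple of the exponent of `G`.  Suppose `T ⊴ G` with `A(T)` contained in the
center of `T`, and `π : Γ → G` is surjective.  Then for every normal `N ⊴ G` with `N ⊆ T` and
`a(N) = a(T)` and every homomorphism `φ : Γ → G` with `φ(x)N = π(x)N` for all `x`, one has
`b(N,φ,χ) ≤ b(T,π,χ)`; in particular the maximum of `b(N,φ,χ)` over all such pairs `(N,φ)`
equals `b(T,π,χ)`. -/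
theorem statement6 {n : ℕ} {G : Type*} [Group G] [Finite G]
    (ρ : G →* Equiv.Perm (Fin n)) (hρ : Function.Injective ρ)
    (htrans : ∀ a b : Fin n, ∃ g : G, ρ g a = b)
    {Γ : Type*} [Group Γ] {m : ℕ} (hm : Monoid.exponent G ∣ m) (χ : Γ →* (ZMod m)ˣ)
    (T : Subgroup G) (hTnormal : T.Normal)
    (hcenter : ∀ h ∈ ASet ρ (T : Set G), ∀ t ∈ T, h * t = t * h)
    (π : Γ →* G) (hπ : Function.Surjective π) :
    (∀ N : Subgroup G, N.Normal → N ≤ T → aInv ρ (N : Set G) = aInv ρ (T : Set G) →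
      ∀ φ : Γ →* G, (∀ x, (π x)⁻¹ * φ x ∈ N) → bInv ρ N φ χ ≤ bInv ρ T π χ) ∧
    IsGreatest {k | ∃ N : Subgroup G, N.Normal ∧ N ≤ T ∧
        aInv ρ (N : Set G) = aInv ρ (T : Set G) ∧
        ∃ φ : Γ →* G, (∀ x, (π x)⁻¹ * φ x ∈ N) ∧ bInv ρ N φ χ = k}
      (bInv ρ T π χ) :=
  statement6_general ρ χ T hTnormal hcenter π
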